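/- Necessary condition for semi-trivial solutions (from Theorem 1.1): let p ≥ 2, λ1 > 0, suppose μ(x) ≥ μ0 > 0 and h1(x) ≥ h0 > 0 for all x ∈ V, let e1 ∈ L^{p/(p−1)}(V), and let F : V × ℝ² → ℝ be continuously differentiable in (s,t) with |F_s(x,s,0)| ≤ f1(x)|s|^{p−1} + g1(x) for all x, s, where f1 : V → [0,∞) is bounded with ‖f1‖_∞ < h0 and g1 ∈ L^{p/(p−1)}(V), g1 ≥ 0. Suppose u : V → ℝ satisfies ∑_{x∈V} μ(x)(|∇u|^p(x)+h1(x)|u(x)|^p) < ∞ and the energy identity ∑_{x∈V} μ(x)(|∇u|^p(x) + h1(x)|u(x)|^p) = ∑_{x∈V} μ(x)(F_s(x,u(x),0)·u(x) + λ1 e1(x)·u(x)). Then sup_{x∈V}|u(x)| ≤ μ0^{−1/p}·((λ1‖e1‖_{L^{p/(p−1)}(V)} + ‖g1‖_{L^{p/(p−1)}(V)})/(h0 − ‖f1‖_∞))^{1/(p−1)}. -/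

import Mathlib

open scoped BigOperators
open Filter Topology

/-- A locally finite weighted graph: `ω x y ≠ 0` encodes the edge relation `x ∼ y`,
edge weights are symmetric and nonnegative, `μ` is a positive vertex measure, and every
vertex has finitely many neighbors. -/
structure WGraph (V : Type*) where
  ω : V → V → ℝ
  μ : V → ℝ
  symm : ∀ x y, ω x y = ω y x
  loopless : ∀ x, ω x x = 0
  weight_nonneg : ∀ x y, 0 ≤ ω x y
  mu_pos : ∀ x, 0 < μ x
  locFin : ∀ x, {y | ω x y ≠ 0}.Finite

namespace WGraph

variable {V : Type*}

/-- The gradient form `Γ(u,v)(x)`. -/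
noncomputable def gamma (G : WGraph V) (u v : V → ℝ) (x : V) : ℝ :=
  (1 / (2 * G.μ x)) * ∑' y, G.ω x y * (u y - u x) * (v y - v x)

/-- The length of the gradient `|∇u|(x)`. -/
noncomputable def grad (G : WGraph V) (u : V → ℝ) (x : V) : ℝ :=
  Real.sqrt (G.gamma u u x)

/-- The graph `p`-Laplacian `Δ_p u (x)`. -/
noncomputable def lapP (G : WGraph V) (p : ℝ) (u : V → ℝ) (x : V) : ℝ :=
  (1 / (2 * G.μ x)) *
    ∑' y, (G.grad u y ^ (p - 2) + G.grad u x ^ (p - 2)) * (G.ω x y * (u y - u x))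

/-- The degree `deg(x) = ∑_{y ∼ x} ω_{xy}`. -/
noncomputable def deg (G : WGraph V) (x : V) : ℝ := ∑' y, G.ω x y

/-- The underlying simple graph: `x ∼ y` iff `ω x y ≠ 0`. -/
def toSimpleGraph (G : WGraph V) : SimpleGraph V where
  Adj x y := G.ω x y ≠ 0
  symm := by
    constructor
    intro x y hxy
    rw [G.symm]
    exact hxy
  loopless := by
    constructor
    intro x hx
    exact hx (G.loopless x)

/-- The graph distance `dist(x,y)`: the minimal number of edges joining `x` and `y`. -/
noncomputable def dist (G : WGraph V) (x y : V) : ℕ := (G.toSimpleGraph).dist x y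

/-- `∑_{x∈V} μ(x)(|∇u|^s(x) + h(x)|u(x)|^s)`, the `s`-th power of the `W_h^{1,s}(V)` norm. -/
noncomputable def sobSum (G : WGraph V) (h : V → ℝ) (s : ℝ) (u : V → ℝ) : ℝ :=
  ∑' x, G.μ x * (G.grad u x ^ s + h x * |u x| ^ s)

/-- Finiteness of the Sobolev sum, i.e. membership in `W_h^{1,s}(V)`. -/
def SobSummable (G : WGraph V) (h : V → ℝ) (s : ℝ) (u : V → ℝ) : Prop :=
  Summable fun x => G.μ x * (G.grad u x ^ s + h x * |u x| ^ s)

/-- The `W_h^{1,s}(V)` norm. -/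
noncomputable def sobNorm (G : WGraph V) (h : V → ℝ) (s : ℝ) (u : V → ℝ) : ℝ :=
  (G.sobSum h s u) ^ (1 / s)

/-- Membership in `L^r(V)`. -/
def MemLpV (G : WGraph V) (r : ℝ) (g : V → ℝ) : Prop :=
  Summable fun x => G.μ x * |g x| ^ r

/-- The `L^r(V)` norm. -/
noncomputable def lpNorm (G : WGraph V) (r : ℝ) (g : V → ℝ) : ℝ :=
  (∑' x, G.μ x * |g x| ^ r) ^ (1 / r)

/-- The energy functional `φ_λ(u,v)` associated with the `(p,q)`-Laplacian system. -/
noncomputable def energy (G : WGraph V) (p q lam : ℝ) (h1 h2 e1 e2 : V → ℝ)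
    (F : V → ℝ → ℝ → ℝ) (u v : V → ℝ) : ℝ :=
  (1 / p) * G.sobSum h1 p u + (1 / q) * G.sobSum h2 q v
    - ∑' x, G.μ x * F x (u x) (v x)
    - lam * ∑' x, G.μ x * (e1 x * u x + e2 x * v x)

/-- The energy functional `φ_ε(u)` associated with the scalar `p`-Laplacian equation. -/
noncomputable def energyScalar (G : WGraph V) (p eps : ℝ) (h e : V → ℝ)
    (F : V → ℝ → ℝ) (u : V → ℝ) : ℝ :=
  (1 / p) * G.sobSum h p u - ∑' x, G.μ x * F x (u x) - eps * ∑' x, G.μ x * (e x * u x)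

end WGraph

/-- `F(x,s,t)` is continuously differentiable in `(s,t)`, with partial derivatives
`Fs` and `Ft`. -/
def IsC1Pair {V : Type*} (F Fs Ft : V → ℝ → ℝ → ℝ) : Prop :=
  ∀ x : V,
    (∀ s t : ℝ, HasDerivAt (fun z => F x z t) (Fs x s t) s) ∧
    (∀ s t : ℝ, HasDerivAt (fun z => F x s z) (Ft x s t) t) ∧
    Continuous (fun st : ℝ × ℝ => Fs x st.1 st.2) ∧
    Continuous (fun st : ℝ × ℝ => Ft x st.1 st.2)

/-- `F(x,s)` is continuously differentiable in `s`, with derivative `Fs`. -/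
def IsC1Scalar {V : Type*} (F Fs : V → ℝ → ℝ) : Prop :=
  ∀ x : V, (∀ s : ℝ, HasDerivAt (F x) (Fs x s) s) ∧ Continuous (Fs x)

/-!
Write `S = ∑ μ|u|^p = ‖u‖_p^p`. The left side of the energy identity is at least `h0 S`,
while the growth bound on `F_s` and Hölder's inequality bound the right side by
`‖f1‖_∞ S + (λ1‖e1‖_{p'} + ‖g1‖_{p'}) ‖u‖_p` with `p' = p/(p-1)`. Hence
`(h0 - ‖f1‖_∞) ‖u‖_p^{p-1} ≤ λ1‖e1‖_{p'} + ‖g1‖_{p'}`, and `μ0 |u(x)|^p ≤ S` turns this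
into the pointwise bound.
-/

open Real

lemma summable_and_weighted_inner_le_Lp_mul_Lq_tsum_of_nonneg {ι : Type*} {p q : ℝ}
    (hpq : p.HolderConjugate q) {m f g : ι → ℝ} (hm : ∀ i, 0 ≤ m i) (hf : ∀ i, 0 ≤ f i)
    (hg : ∀ i, 0 ≤ g i) (hf_sum : Summable fun i => m i * f i ^ p)
    (hg_sum : Summable fun i => m i * g i ^ q) :
    (Summable fun i => m i * (f i * g i)) ∧
      ∑' i, m i * (f i * g i)
        ≤ (∑' i, m i * f i ^ p) ^ (1 / p) * (∑' i, m i * g i ^ q) ^ (1 / q) := by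
  have hweight : ∀ {r : ℝ}, r ≠ 0 → ∀ {v : ι → ℝ}, (∀ i, 0 ≤ v i) →
      ∀ i, (m i ^ (1 / r) * v i) ^ r = m i * v i ^ r := fun hr _ hv i => by
    rw [mul_rpow (rpow_nonneg (hm i) _) (hv i), ← rpow_mul (hm i), one_div_mul_cancel hr,
      rpow_one]
  have hsplit : ∀ i, (m i ^ (1 / p) * f i) * (m i ^ (1 / q) * g i) = m i * (f i * g i) := by
    intro i
    rw [mul_mul_mul_comm, ← rpow_add' (hm i) (by rw [hpq.one_div_add_one_div]; norm_num),
      hpq.one_div_add_one_div, div_one, rpow_one]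
  have h := summable_and_inner_le_Lp_mul_Lq_tsum_of_nonneg hpq
    (fun i => mul_nonneg (rpow_nonneg (hm i) _) (hf i))
    (fun i => mul_nonneg (rpow_nonneg (hm i) _) (hg i))
    (hf_sum.congr fun i => (hweight hpq.ne_zero hf i).symm)
    (hg_sum.congr fun i => (hweight hpq.symm.ne_zero hg i).symm)
  simpa only [hsplit, hweight hpq.ne_zero hf, hweight hpq.symm.ne_zero hg] using h

lemma le_div_rpow_of_mul_rpow_le {a C T p : ℝ} (ha : 0 < a) (hC : 0 ≤ C) (hT : 0 ≤ T)
    (hp : 1 < p) (h : a * T ^ p ≤ C * T) : T ≤ (C / a) ^ (1 / (p - 1)) := by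
  rcases hT.eq_or_lt with rfl | hT
  · exact rpow_nonneg (div_nonneg hC ha.le) _
  have hsplit : T ^ p = T ^ (p - 1) * T := by
    rw [rpow_sub_one hT.ne', div_mul_cancel₀ _ hT.ne']
  rw [one_div, le_rpow_inv_iff_of_pos hT.le (div_nonneg hC ha.le) (sub_pos.2 hp),
    le_div_iff₀' ha]
  rw [hsplit, ← mul_assoc] at h
  exact le_of_mul_le_mul_right h hT

namespace WGraph

variable {V : Type*} (G : WGraph V)

lemma tsum_mu_mul_abs_rpow_nonneg (r : ℝ) (g : V → ℝ) : 0 ≤ ∑' x, G.μ x * |g x| ^ r :=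
  tsum_nonneg fun x => mul_nonneg (G.mu_pos x).le (rpow_nonneg (abs_nonneg _) _)

lemma lpNorm_nonneg (r : ℝ) (g : V → ℝ) : 0 ≤ G.lpNorm r g :=
  rpow_nonneg (G.tsum_mu_mul_abs_rpow_nonneg r g) _

lemma lpNorm_rpow {r : ℝ} (hr : r ≠ 0) (g : V → ℝ) :
    G.lpNorm r g ^ r = ∑' x, G.μ x * |g x| ^ r := by
  rw [lpNorm, one_div, rpow_inv_rpow (G.tsum_mu_mul_abs_rpow_nonneg r g) hr]

lemma summable_and_tsum_mul_abs_le_lpNorm_mul_lpNorm {p q : ℝ} (hpq : p.HolderConjugate q)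
    {f g : V → ℝ} (hf : G.MemLpV p f) (hg : G.MemLpV q g) :
    (Summable fun x => G.μ x * (|f x| * |g x|)) ∧
      ∑' x, G.μ x * (|f x| * |g x|) ≤ G.lpNorm p f * G.lpNorm q g :=
  summable_and_weighted_inner_le_Lp_mul_Lq_tsum_of_nonneg hpq (fun x => (G.mu_pos x).le)
    (fun x => abs_nonneg (f x)) (fun x => abs_nonneg (g x)) hf hg

lemma abs_le_rpow_neg_mul_lpNorm {μ0 r : ℝ} (hμ0 : 0 < μ0) (hμ : ∀ x, μ0 ≤ G.μ x)
    (hr : 0 < r) {g : V → ℝ} (hg : G.MemLpV r g) (x : V) :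
    |g x| ≤ μ0 ^ (-(1 / r)) * G.lpNorm r g := by
  have hx : μ0 * |g x| ^ r ≤ ∑' y, G.μ y * |g y| ^ r :=
    (mul_le_mul_of_nonneg_right (hμ x) (rpow_nonneg (abs_nonneg _) _)).trans
      (hg.le_tsum x fun y _ => mul_nonneg (G.mu_pos y).le (rpow_nonneg (abs_nonneg _) _))
  calc |g x| = (|g x| ^ r) ^ (1 / r) := by rw [one_div, rpow_rpow_inv (abs_nonneg _) hr.ne']
    _ ≤ ((∑' y, G.μ y * |g y| ^ r) / μ0) ^ (1 / r) := by
      gcongr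
      rwa [le_div_iff₀' hμ0]
    _ = μ0 ^ (-(1 / r)) * G.lpNorm r g := by
      rw [div_rpow (G.tsum_mu_mul_abs_rpow_nonneg r g) hμ0.le, rpow_neg hμ0.le, lpNorm]
      ring

variable {h : V → ℝ} {s h0 : ℝ} {u : V → ℝ}

lemma mu_mul_abs_rpow_le_sobolev_term (hh : ∀ x, h0 ≤ h x) (x : V) :
    G.μ x * (h0 * |u x| ^ s) ≤ G.μ x * (G.grad u x ^ s + h x * |u x| ^ s) := by
  have hgrad : 0 ≤ G.grad u x ^ s := rpow_nonneg (sqrt_nonneg _) _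
  have hh' := mul_le_mul_of_nonneg_right (hh x) (rpow_nonneg (abs_nonneg (u x)) s)
  exact mul_le_mul_of_nonneg_left (by linarith) (G.mu_pos x).le

lemma memLpV_of_sobSummable (hh0 : 0 < h0) (hh : ∀ x, h0 ≤ h x) (hu : G.SobSummable h s u) :
    G.MemLpV s u := by
  have hsum : Summable fun x => G.μ x * (h0 * |u x| ^ s) :=
    hu.of_nonneg_of_le (fun x => by positivity [G.mu_pos x])
      (G.mu_mul_abs_rpow_le_sobolev_term hh)
  refine (hsum.mul_left h0⁻¹).congr fun x => ?_
  field_simp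

lemma mul_tsum_le_sobSum (hh0 : 0 < h0) (hh : ∀ x, h0 ≤ h x) (hu : G.SobSummable h s u) :
    h0 * ∑' x, G.μ x * |u x| ^ s ≤ G.sobSum h s u := by
  rw [← tsum_mul_left]
  refine ((G.memLpV_of_sobSummable hh0 hh hu).mul_left h0).tsum_le_tsum (fun x => ?_) hu
  linarith [G.mu_mul_abs_rpow_le_sobolev_term (u := u) (s := s) hh x]

lemma tsum_mul_add_le_of_abs_le {p q : ℝ} (hpq : p.HolderConjugate q) {n e g u : V → ℝ}
    {M lam : ℝ} (hlam : 0 ≤ lam) (hu : G.MemLpV p u) (he : G.MemLpV q e) (hg : G.MemLpV q g)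
    (hn : ∀ x, |n x| ≤ M * |u x| ^ (p - 1) + g x)
    (hsum : Summable fun x => G.μ x * (n x * u x + lam * e x * u x)) :
    ∑' x, G.μ x * (n x * u x + lam * e x * u x)
      ≤ M * ∑' x, G.μ x * |u x| ^ p + (lam * G.lpNorm q e + G.lpNorm q g) * G.lpNorm p u := by
  obtain ⟨hug_sum, hug⟩ := G.summable_and_tsum_mul_abs_le_lpNorm_mul_lpNorm hpq hu hg
  obtain ⟨hue_sum, hue⟩ := G.summable_and_tsum_mul_abs_le_lpNorm_mul_lpNorm hpq hu he
  have hpt : ∀ x, G.μ x * (n x * u x + lam * e x * u x)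
      ≤ M * (G.μ x * |u x| ^ p)
          + (G.μ x * (|u x| * |g x|) + lam * (G.μ x * (|u x| * |e x|))) := by
    intro x
    have hnu : n x * u x ≤ M * |u x| ^ p + |u x| * |g x| :=
      calc n x * u x ≤ |n x| * |u x| := by rw [← abs_mul]; exact le_abs_self _
        _ ≤ (M * |u x| ^ (p - 1) + |g x|) * |u x| := by
          gcongr
          exact (hn x).trans (by gcongr; exact le_abs_self _)
        _ = M * |u x| ^ p + |u x| * |g x| := by
          rw [add_mul, mul_assoc, ← rpow_add_one' (abs_nonneg _) (by linarith [hpq.lt]),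
            sub_add_cancel]
          ring
    have heu : lam * e x * u x ≤ lam * (|u x| * |e x|) := by
      rw [mul_assoc, mul_comm (|u x|), ← abs_mul]
      exact mul_le_mul_of_nonneg_left (le_abs_self _) hlam
    have := mul_le_mul_of_nonneg_left (add_le_add hnu heu) (G.mu_pos x).le
    linarith
  calc ∑' x, G.μ x * (n x * u x + lam * e x * u x)
      ≤ ∑' x, (M * (G.μ x * |u x| ^ p)
          + (G.μ x * (|u x| * |g x|) + lam * (G.μ x * (|u x| * |e x|)))) :=
        hsum.tsum_le_tsum hpt ((hu.mul_left M).add (hug_sum.add (hue_sum.mul_left lam)))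
    _ = M * ∑' x, G.μ x * |u x| ^ p
          + (∑' x, G.μ x * (|u x| * |g x|) + lam * ∑' x, G.μ x * (|u x| * |e x|)) := by
        rw [(hu.mul_left M).tsum_add (hug_sum.add (hue_sum.mul_left lam)),
          hug_sum.tsum_add (hue_sum.mul_left lam), tsum_mul_left, tsum_mul_left]
    _ ≤ M * ∑' x, G.μ x * |u x| ^ p
          + (G.lpNorm p u * G.lpNorm q g + lam * (G.lpNorm p u * G.lpNorm q e)) := by
        gcongr
    _ = _ := by ring

end WGraph

theorem semitrivial_bound_general {V : Type*} (G : WGraph V)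
    (μ0 h0 : ℝ) (hμ0 : 0 < μ0) (hh0 : 0 < h0) (hμ : ∀ x, μ0 ≤ G.μ x)
    (p : ℝ) (hp : 2 ≤ p) (lam1 : ℝ) (hlam1 : 0 < lam1)
    (h1 : V → ℝ) (hh1 : ∀ x, h0 ≤ h1 x)
    (e1 : V → ℝ) (he1L : G.MemLpV (p / (p - 1)) e1)
    (Fs : V → ℝ → ℝ → ℝ)
    (f1 g1 : V → ℝ) (hf1b : BddAbove (Set.range f1))
    (hf1small : (⨆ x, f1 x) < h0)
    (hg1L : G.MemLpV (p / (p - 1)) g1)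
    (hFs : ∀ x s, |Fs x s 0| ≤ f1 x * |s| ^ (p - 1) + g1 x)
    (u : V → ℝ) (hu : G.SobSummable h1 p u)
    (hRHS : Summable fun x => G.μ x * (Fs x (u x) 0 * u x + lam1 * e1 x * u x))
    (hEnergy : G.sobSum h1 p u
      = ∑' x, G.μ x * (Fs x (u x) 0 * u x + lam1 * e1 x * u x)) :
    ∀ x, |u x| ≤ μ0 ^ (-(1 / p)) *
      ((lam1 * G.lpNorm (p / (p - 1)) e1 + G.lpNorm (p / (p - 1)) g1)
        / (h0 - ⨆ x, f1 x)) ^ (1 / (p - 1)) := by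
  intro x
  have hp1 : 1 < p := by linarith
  have hpq : p.HolderConjugate (p / (p - 1)) := .conjExponent hp1
  have hu_mem : G.MemLpV p u := G.memLpV_of_sobSummable hh0 hh1 hu
  have hFs_sup : ∀ x, |Fs x (u x) 0| ≤ (⨆ x, f1 x) * |u x| ^ (p - 1) + g1 x := fun x =>
    (hFs x (u x)).trans (by gcongr; exact le_ciSup hf1b x)
  have hkey : (h0 - ⨆ x, f1 x) * G.lpNorm p u ^ p
      ≤ (lam1 * G.lpNorm (p / (p - 1)) e1 + G.lpNorm (p / (p - 1)) g1) * G.lpNorm p u := by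
    have hlower := G.mul_tsum_le_sobSum hh0 hh1 hu
    have hupper := G.tsum_mul_add_le_of_abs_le hpq hlam1.le hu_mem he1L hg1L hFs_sup hRHS
    rw [G.lpNorm_rpow (by linarith)]
    linarith
  calc |u x| ≤ μ0 ^ (-(1 / p)) * G.lpNorm p u :=
        G.abs_le_rpow_neg_mul_lpNorm hμ0 hμ (by linarith) hu_mem x
    _ ≤ _ := by
      gcongr
      exact le_div_rpow_of_mul_rpow_le (sub_pos.2 hf1small)
        (add_nonneg (mul_nonneg hlam1.le (G.lpNorm_nonneg _ _)) (G.lpNorm_nonneg _ _))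
        (G.lpNorm_nonneg _ _) hp1 hkey

/-- necessary condition for semi-trivial solutions (from Theorem 1.1):
if `u ∈ W_{h1}^{1,p}(V)` satisfies the energy identity
`∑ μ(|∇u|^p + h1|u|^p) = ∑ μ(F_s(x,u,0)u + λ1 e1 u)`, then
`sup_{x∈V}|u(x)| ≤ μ0^{−1/p}·((λ1‖e1‖ + ‖g1‖)/(h0 − ‖f1‖_∞))^{1/(p−1)}`. -/
theorem semitrivial_bound {V : Type*} (G : WGraph V)
    (μ0 h0 : ℝ) (hμ0 : 0 < μ0) (hh0 : 0 < h0) (hμ : ∀ x, μ0 ≤ G.μ x)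
    (p : ℝ) (hp : 2 ≤ p) (lam1 : ℝ) (hlam1 : 0 < lam1)
    (h1 : V → ℝ) (hh1 : ∀ x, h0 ≤ h1 x)
    (e1 : V → ℝ) (he1L : G.MemLpV (p / (p - 1)) e1)
    (F Fs Ft : V → ℝ → ℝ → ℝ) (hC1 : IsC1Pair F Fs Ft)
    (f1 g1 : V → ℝ) (hf1 : ∀ x, 0 ≤ f1 x) (hf1b : BddAbove (Set.range f1))
    (hf1small : (⨆ x, f1 x) < h0)
    (hg1 : ∀ x, 0 ≤ g1 x) (hg1L : G.MemLpV (p / (p - 1)) g1)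
    (hFs : ∀ x s, |Fs x s 0| ≤ f1 x * |s| ^ (p - 1) + g1 x)
    (u : V → ℝ) (hu : G.SobSummable h1 p u)
    (hRHS : Summable fun x => G.μ x * (Fs x (u x) 0 * u x + lam1 * e1 x * u x))
    (hEnergy : G.sobSum h1 p u
      = ∑' x, G.μ x * (Fs x (u x) 0 * u x + lam1 * e1 x * u x)) :
    ∀ x, |u x| ≤ μ0 ^ (-(1 / p)) *
      ((lam1 * G.lpNorm (p / (p - 1)) e1 + G.lpNorm (p / (p - 1)) g1)
        / (h0 - ⨆ x, f1 x)) ^ (1 / (p - 1)) :=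
  semitrivial_bound_general G μ0 h0 hμ0 hh0 hμ p hp lam1 hlam1 h1 hh1 e1 he1L Fs f1 g1 hf1b hf1small
    hg1L hFs u hu hRHS hEnergy
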